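/- arXiv:1010.0821 — 6 statements merged into one kernel-verified Lean document; each statement's English description precedes it below -/
import Mathlib

section
/- Let g be a finite-dimensional Lie algebra over an algebraically closed field K of characteristic 0. Then g admits a very nilpotent basis if and only if g is a nilpotent Lie algebra. -/
/-- The set of iterated brackets of the family `y`: the smallest subset of `g`
containing the `y i` and closed under the Lie bracket. -/
inductive IsIterBracket {g : Type*} [LieRing g] {n : ℕ} (y : Fin n → g) : g → Prop
  | base (i : Fin n) : IsIterBracket y (y i)
  | bracket {u v : g} : IsIterBracket y u → IsIterBracket y v → IsIterBracket y ⁅u, v⁆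

/-!
This is Jacobson's argument for weakly closed sets. The iterated brackets `S` of the basis form a
set closed under the bracket, consisting of ad-nilpotent elements and spanning `g`. Among the
subalgebras generated by a subset `T ⊆ S` and acting nilpotently on `g`, take a maximal one `H`.
If `S ⊄ H`, bracketing with `T` cannot push elements of `S \ H` arbitrarily deep into the lower
central series of the `H`-module `g`, so some `z ∈ S \ H` has `⁅T, z⁆ ⊆ H`; such a `z`
normalizes `H`. Then `H` is an ideal of `H + K z`, and an ideal acting nilpotently together with
an ad-nilpotent complementary element makes all of `H + K z` act nilpotently, contradicting
maximality. Hence every element of `g = span S` is ad-nilpotent, and Engel's theorem applies.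
-/

open LieModule

section Jacobson

variable {R L : Type*} [CommRing R] [LieRing L] [LieAlgebra R L]

namespace LieSubalgebra

theorem mem_normalizer_lieSpan_of_forall_lie_mem {s : Set L} {z : L}
    (h : ∀ t ∈ s, ⁅t, z⁆ ∈ lieSpan R L s) : z ∈ (lieSpan R L s).normalizer := by
  rw [mem_normalizer_iff']
  intro y hy
  induction hy using lieSpan_induction with
  | mem t ht => exact h t ht
  | zero => simp
  | add y₁ y₂ _ _ ih₁ ih₂ => rw [add_lie]; exact add_mem ih₁ ih₂
  | smul a y _ ih => rw [smul_lie]; exact (lieSpan R L s).smul_mem a ih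
  | lie y₁ y₂ hy₁ hy₂ ih₁ ih₂ =>
    rw [lie_lie]
    exact sub_mem (lie_mem _ hy₁ ih₂) (lie_mem _ hy₂ ih₁)

theorem exists_notMem_forall_lie_mem {S T : Set L} {H : LieSubalgebra R L}
    [LieModule.IsNilpotent H L] (hS : ∀ u ∈ S, ∀ v ∈ S, ⁅u, v⁆ ∈ S) (hTS : T ⊆ S)
    (hTH : T ⊆ H) (hSH : ¬S ⊆ H) : ∃ z ∈ S, z ∉ H ∧ ∀ t ∈ T, ⁅t, z⁆ ∈ H := by
  by_contra! h
  have deep : ∀ k, ∃ z ∈ S, z ∉ H ∧ z ∈ lowerCentralSeries R H L k := by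
    intro k
    induction k with
    | zero =>
      obtain ⟨z, hzS, hzH⟩ := Set.not_subset.mp hSH
      exact ⟨z, hzS, hzH, LieSubmodule.mem_top z⟩
    | succ k ih =>
      obtain ⟨z, hzS, hzH, hzk⟩ := ih
      obtain ⟨t, htT, htz⟩ := h z hzS hzH
      refine ⟨⁅t, z⁆, hS t (hTS htT) z hzS, htz, ?_⟩
      rw [lowerCentralSeries_succ]
      exact LieSubmodule.lie_mem_lie (LieSubmodule.mem_top (⟨t, hTH htT⟩ : H)) hzk
  obtain ⟨k, hk⟩ := LieModule.IsNilpotent.nilpotent R H L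
  obtain ⟨z, -, hzH, hzk⟩ := deep k
  rw [hk, LieSubmodule.mem_bot] at hzk
  exact hzH (hzk ▸ zero_mem H)

def adjoinOfMemNormalizer (H : LieSubalgebra R L) {z : L} (hz : z ∈ H.normalizer) :
    LieSubalgebra R L :=
  { R ∙ z ⊔ H.toSubmodule with lie_mem' := lie_mem_sup_of_mem_normalizer hz }

theorem isNilpotent_adjoinOfMemNormalizer {M : Type*} [AddCommGroup M] [Module R M]
    [LieRingModule L M] [LieModule R L M] [IsNoetherian R M] {H : LieSubalgebra R L}
    [LieModule.IsNilpotent H M] {z : L} (hz : z ∈ H.normalizer)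
    (hzM : IsNilpotent (toEnd R L M z)) :
    LieModule.IsNilpotent (H.adjoinOfMemNormalizer hz) M := by
  set H' := H.adjoinOfMemNormalizer hz
  have hzH' : z ∈ H' := Submodule.mem_sup_left (Submodule.mem_span_singleton_self z)
  have hHH' : H ≤ H' := (toSubmodule_le_toSubmodule H H').mp le_sup_right
  obtain ⟨I, hI⟩ := exists_nested_lieIdeal_ofLe_normalizer hHH' (by
    rw [← toSubmodule_le_toSubmodule]
    exact sup_le ((Submodule.span_singleton_le_iff_mem _ _).mpr hz) H.le_normalizer)
  have hzI : R ∙ (⟨z, hzH'⟩ : H') ⊔ I.toSubmodule = ⊤ := by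
    rw [← LieIdeal.toLieSubalgebra_toSubmodule R H' I, hI]
    apply Submodule.map_injective_of_injective (H' : Submodule R L).injective_subtype
    simp only [coe_ofLe, Submodule.map_sup, Submodule.map_subtype_range_inclusion,
      Submodule.map_top, Submodule.range_subtype]
    rw [Submodule.map_subtype_span_singleton]
    rfl
  have hIM : LieModule.IsNilpotent I M := by
    refine (isNilpotent_iff_forall' (R := R)).mpr fun y => ?_
    have hyH : ((y : H') : L) ∈ H := by
      have : (y : H') ∈ (I : LieSubalgebra R H') := y.2
      rwa [hI, mem_ofLe] at this
    exact isNilpotent_toEnd_of_isNilpotent R H M ⟨_, hyH⟩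
  exact LieSubmodule.isNilpotentOfIsNilpotentSpanSupEqTop hzI hzM hIM

end LieSubalgebra

open LieSubalgebra in
theorem LieAlgebra.isNilpotent_ad_of_mem_span [IsNoetherian R L] {S : Set L}
    (hS : ∀ u ∈ S, ∀ v ∈ S, ⁅u, v⁆ ∈ S) (hSnil : ∀ s ∈ S, IsNilpotent (ad R L s))
    {x : L} (hx : x ∈ Submodule.span R S) : IsNilpotent (ad R L x) := by
  let 𝓗 : Set (LieSubalgebra R L) :=
    {H | (∃ T ⊆ S, lieSpan R L T = H) ∧ ∀ y ∈ H, IsNilpotent (ad R L y)}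
  have hbot : ⊥ ∈ 𝓗 := ⟨⟨∅, Set.empty_subset S, span_empty R L⟩, fun y hy => by
    rw [(mem_bot y).mp hy, map_zero]
    exact IsNilpotent.zero⟩
  obtain ⟨_, ⟨⟨T, hTS, rfl⟩, hTnil⟩, hmax⟩ := wellFounded_gt.has_min 𝓗 ⟨⊥, hbot⟩
  suffices S ⊆ lieSpan R L T from hTnil x (Submodule.span_le.mpr this hx)
  intro s hs
  by_contra hsT
  have : LieModule.IsNilpotent (lieSpan R L T) L :=
    (isNilpotent_iff_forall' (R := R)).mpr fun y => hTnil y y.2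
  obtain ⟨z, hzS, hzT, hTz⟩ :=
    exists_notMem_forall_lie_mem hS hTS subset_lieSpan (Set.not_subset.mpr ⟨s, hs, hsT⟩)
  have hz := mem_normalizer_lieSpan_of_forall_lie_mem hTz
  set H' := (lieSpan R L T).adjoinOfMemNormalizer hz
  have : LieModule.IsNilpotent H' L := isNilpotent_adjoinOfMemNormalizer hz (hSnil z hzS)
  have hle : lieSpan R L (insert z T) ≤ H' := by
    rw [lieSpan_le, Set.insert_subset_iff]
    exact ⟨Submodule.mem_sup_left (Submodule.mem_span_singleton_self z),
      fun t ht => Submodule.mem_sup_right (subset_lieSpan ht)⟩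
  have hmem : lieSpan R L (insert z T) ∈ 𝓗 :=
    ⟨⟨insert z T, Set.insert_subset hzS hTS, rfl⟩,
      fun y hy => isNilpotent_toEnd_of_isNilpotent R H' L ⟨y, hle hy⟩⟩
  have hlt : lieSpan R L T < lieSpan R L (insert z T) :=
    lt_of_le_of_ne (lieSpan_mono (Set.subset_insert z T))
      fun h => hzT (h ▸ subset_lieSpan (Set.mem_insert z T))
  exact hmax _ hmem hlt

end Jacobson

theorem veryNilpotentBasis_iff_isNilpotent_general
    {K : Type*} [Field K]
    {g : Type*} [LieRing g] [LieAlgebra K g] [FiniteDimensional K g] :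
    (∃ (n : ℕ) (b : Module.Basis (Fin n) K g),
        ∀ z : g, IsIterBracket (⇑b) z → IsNilpotent (LieAlgebra.ad K g z)) ↔
      LieRing.IsNilpotent g := by
  rw [LieAlgebra.isNilpotent_iff_forall (R := K)]
  constructor
  · rintro ⟨_, b, hb⟩ x
    have hspan : Submodule.span K {z | IsIterBracket (⇑b) z} = ⊤ := top_le_iff.mp <|
      b.span_eq ▸ Submodule.span_mono (Set.range_subset_iff.mpr IsIterBracket.base)
    exact LieAlgebra.isNilpotent_ad_of_mem_span (fun _ hu _ hv => hu.bracket hv) hb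
      (hspan ▸ Submodule.mem_top)
  · exact fun h => ⟨_, Module.finBasis K g, fun z _ => h z⟩

/-- A finite-dimensional Lie algebra over an algebraically closed field of characteristic
zero admits a very nilpotent basis if and only if it is nilpotent. -/
theorem veryNilpotentBasis_iff_isNilpotent
    {K : Type*} [Field K] [IsAlgClosed K] [CharZero K]
    {g : Type*} [LieRing g] [LieAlgebra K g] [FiniteDimensional K g] :
    (∃ (n : ℕ) (b : Module.Basis (Fin n) K g),
        ∀ z : g, IsIterBracket (⇑b) z → IsNilpotent (LieAlgebra.ad K g z)) ↔
      LieRing.IsNilpotent g :=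
  veryNilpotentBasis_iff_isNilpotent_general
end

section
/- Let g be a nonzero finite-dimensional semisimple Lie algebra over an algebraically closed field K of characteristic 0. Then g has no very nilpotent basis. -/
open LieAlgebra Submodule

namespace LieSubalgebra

variable {R L : Type*} [CommRing R] [LieRing L] [LieAlgebra R L]

def supSpanSingleton (H : LieSubalgebra R L) {x : L} (hx : x ∈ H.normalizer) :
    LieSubalgebra R L :=
  { R ∙ x ⊔ H.toSubmodule with
    lie_mem' := fun hy hz => lie_mem_sup_of_mem_normalizer hx hy hz }

variable {H : LieSubalgebra R L} {x : L} (hx : x ∈ H.normalizer)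

lemma self_mem_supSpanSingleton : x ∈ H.supSpanSingleton hx :=
  mem_sup_left (mem_span_singleton_self x)

lemma le_supSpanSingleton : H ≤ H.supSpanSingleton hx :=
  fun _ hy => mem_sup_right hy

lemma lt_supSpanSingleton (hxH : x ∉ H) : H < H.supSpanSingleton hx :=
  SetLike.lt_iff_le_and_exists.mpr ⟨le_supSpanSingleton hx, x, self_mem_supSpanSingleton hx, hxH⟩

lemma supSpanSingleton_le_normalizer : H.supSpanSingleton hx ≤ H.normalizer :=
  fun _ hy => (sup_le ((span_singleton_le_iff_mem _ _).mpr hx) H.le_normalizer) hy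

theorem isNilpotent_ad_of_mem_supSpanSingleton [IsNoetherian R L]
    (hxnil : IsNilpotent (ad R L x)) (hHnil : ∀ y ∈ H, IsNilpotent (ad R L y)) :
    ∀ y ∈ H.supSpanSingleton hx, IsNilpotent (ad R L y) := by
  set H' := H.supSpanSingleton hx
  obtain ⟨I, hI⟩ := exists_nested_lieIdeal_ofLe_normalizer (le_supSpanSingleton hx)
    (supSpanSingleton_le_normalizer hx)
  have hmemI : ∀ y : H', y ∈ I ↔ (y : L) ∈ H := fun y => by
    rw [← LieIdeal.mem_toLieSubalgebra, hI, mem_ofLe]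
  have hspan : R ∙ (⟨x, self_mem_supSpanSingleton hx⟩ : H') ⊔ I.toSubmodule = ⊤ := by
    refine eq_top_iff.mpr fun y _ => ?_
    obtain ⟨w, hw, z, hz, hyz⟩ := mem_sup.mp (show (y : L) ∈ R ∙ x ⊔ H.toSubmodule from y.2)
    obtain ⟨t, rfl⟩ := mem_span_singleton.mp hw
    have hy : y = t • ⟨x, self_mem_supSpanSingleton hx⟩ + ⟨z, le_supSpanSingleton hx hz⟩ :=
      Subtype.ext hyz.symm
    rw [hy]
    exact add_mem (mem_sup_left (smul_mem _ t (mem_span_singleton_self _)))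
      (mem_sup_right ((hmemI _).mpr hz))
  have hInil : LieModule.IsNilpotent I L := by
    rw [LieModule.isNilpotent_iff_forall' (R := R)]
    exact fun y => hHnil _ ((hmemI y).mp y.2)
  have : LieModule.IsNilpotent H' L :=
    LieSubmodule.isNilpotentOfIsNilpotentSpanSupEqTop hspan hxnil hInil
  exact fun y hy => LieModule.isNilpotent_toEnd_of_isNilpotent R H' L ⟨y, hy⟩

lemma mem_normalizer_of_le_span {T : Set L} (hHT : H.toSubmodule ≤ span R T)
    (hTx : ∀ y ∈ T, ⁅x, y⁆ ∈ H) : x ∈ H.normalizer := by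
  rw [mem_normalizer_iff]
  intro y hy
  exact (span_le.mpr hTx : span R T ≤ H.toSubmodule.comap (ad R L x)) (hHT hy)

theorem exists_mem_normalizer_of_not_subset [IsNoetherian R L] {S : Set L}
    (hS : ∀ x ∈ S, ∀ y ∈ S, ⁅x, y⁆ ∈ S) (hHS : H.toSubmodule ≤ span R (S ∩ H))
    (hHnil : ∀ y ∈ H, IsNilpotent (ad R L y)) (hSH : ¬ S ⊆ H) :
    ∃ x ∈ S, x ∉ H ∧ x ∈ H.normalizer := by
  by_contra! hnorm
  -- Bracketing with elements of `S ∩ H` would push an element of `S \ H` ever deeper into the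
  -- lower central series of the nilpotent `H`-module `L ⧸ H`.
  have : LieModule.IsNilpotent H (L ⧸ H.toLieSubmodule) := by
    rw [LieModule.isNilpotent_iff_forall' (R := R)]
    intro y
    refine Module.End.IsNilpotent.mapQ (fun z hz => ?_) (hHnil y y.2)
    exact H.lie_mem y.2 hz
  obtain ⟨k, hk⟩ := LieModule.IsNilpotent.nilpotent R H (L ⧸ H.toLieSubmodule)
  have hdesc : ∀ i, ∃ x ∈ S, x ∉ H ∧ LieSubmodule.Quotient.mk' H.toLieSubmodule x ∈
      LieModule.lowerCentralSeries R H (L ⧸ H.toLieSubmodule) i := by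
    intro i
    induction i with
    | zero =>
      obtain ⟨x, hxS, hxH⟩ := Set.not_subset.mp hSH
      exact ⟨x, hxS, hxH, by simp⟩
    | succ i ih =>
      obtain ⟨x, hxS, hxH, hxi⟩ := ih
      obtain ⟨y, ⟨hyS, hyH⟩, hyx⟩ : ∃ y ∈ S ∩ H, ⁅y, x⁆ ∉ H := by
        by_contra! h
        refine hnorm x hxS hxH (mem_normalizer_of_le_span hHS fun y hy => ?_)
        rw [← lie_skew, neg_mem_iff]
        exact h y hy
      refine ⟨⁅y, x⁆, hS y hyS x hxS, hyx, ?_⟩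
      rw [LieModule.lowerCentralSeries_succ]
      have := LieSubmodule.lie_mem_lie (LieSubmodule.mem_top (⟨y, hyH⟩ : H)) hxi
      rwa [← LieModuleHom.map_lie] at this
  obtain ⟨x, -, hxH, hx⟩ := hdesc k
  rw [hk, LieSubmodule.mem_bot, LieSubmodule.Quotient.mk_eq_zero] at hx
  exact hxH hx

end LieSubalgebra

namespace LieAlgebra

variable {R L : Type*} [CommRing R] [LieRing L] [LieAlgebra R L] [IsNoetherian R L]

theorem isNilpotent_ad_of_mem_span_s1 {S : Set L} (hS : ∀ x ∈ S, ∀ y ∈ S, ⁅x, y⁆ ∈ S)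
    (hSnil : ∀ x ∈ S, IsNilpotent (ad R L x)) {y : L} (hy : y ∈ span R S) :
    IsNilpotent (ad R L y) := by
  let P : Set (LieSubalgebra R L) :=
    {H | H.toSubmodule ≤ span R (S ∩ H) ∧ ∀ z ∈ H, IsNilpotent (ad R L z)}
  have hP : ⊥ ∈ P := ⟨by simp, fun z hz => by simp [(LieSubalgebra.mem_bot z).mp hz]⟩
  obtain ⟨H, ⟨hHS, hHnil⟩, hHmax⟩ := (wellFounded_gt (α := LieSubalgebra R L)).has_min P ⟨⊥, hP⟩
  have hSH : S ⊆ H := by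
    by_contra hSH
    obtain ⟨x, hxS, hxH, hxN⟩ :=
      LieSubalgebra.exists_mem_normalizer_of_not_subset hS hHS hHnil hSH
    refine hHmax (H.supSpanSingleton hxN) ⟨?_,
      LieSubalgebra.isNilpotent_ad_of_mem_supSpanSingleton hxN (hSnil x hxS) hHnil⟩
      (LieSubalgebra.lt_supSpanSingleton hxN hxH)
    exact sup_le ((span_singleton_le_iff_mem _ _).mpr
      (subset_span ⟨hxS, LieSubalgebra.self_mem_supSpanSingleton hxN⟩))
      (hHS.trans (span_mono (Set.inter_subset_inter_right S
        (LieSubalgebra.le_supSpanSingleton hxN))))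
  exact hHnil y (span_le.mpr hSH hy)

end LieAlgebra

theorem no_veryNilpotentBasis_of_isSemisimple_general
    {K : Type*} [Field K]
    {g : Type*} [LieRing g] [LieAlgebra K g] [FiniteDimensional K g]
    [LieAlgebra.IsSemisimple K g] [Nontrivial g] :
    ¬ ∃ (n : ℕ) (b : Module.Basis (Fin n) K g),
        ∀ z : g, IsIterBracket (⇑b) z → IsNilpotent (LieAlgebra.ad K g z) := by
  rintro ⟨n, b, hb⟩
  have hspan : span K {z | IsIterBracket b z} = ⊤ :=
    eq_top_iff.mpr (b.span_eq ▸ span_mono (Set.range_subset_iff.mpr IsIterBracket.base))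
  have : LieRing.IsNilpotent g := (LieAlgebra.isNilpotent_iff_forall (R := K)).mpr fun x =>
    LieAlgebra.isNilpotent_ad_of_mem_span_s1 (fun _ hu _ hv => hu.bracket hv) hb (hspan ▸ mem_top)
  have hcenter := LieAlgebra.non_trivial_center_of_isNilpotent (R := K) (L := g)
  rw [LieSubmodule.nontrivial_iff_ne_bot, LieAlgebra.center_eq_bot] at hcenter
  exact hcenter rfl

/-- A nonzero finite-dimensional semisimple Lie algebra over an algebraically closed field
of characteristic zero has no very nilpotent basis. -/
theorem no_veryNilpotentBasis_of_isSemisimple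
    {K : Type*} [Field K] [IsAlgClosed K] [CharZero K]
    {g : Type*} [LieRing g] [LieAlgebra K g] [FiniteDimensional K g]
    [LieAlgebra.IsSemisimple K g] [Nontrivial g] :
    ¬ ∃ (n : ℕ) (b : Module.Basis (Fin n) K g),
        ∀ z : g, IsIterBracket (⇑b) z → IsNilpotent (LieAlgebra.ad K g z) :=
  no_veryNilpotentBasis_of_isSemisimple_general
end

section
/- Let g be a finite-dimensional semisimple Lie algebra over an algebraically closed field K of characteristic 0, let (e,h,f) be an sl2-triple in g (so [h,e]=2e, [h,f]=-2f, [e,f]=h), and let g = ⊕_{i∈ℤ} g(h,i) be the eigenspace decomposition of ad_h, with pr_0 : g → g(h,0) the projection onto the zero eigenspace along the other eigenspaces. Then an element x of the subspace ⊕_{i≥0} g(h,i) is ad-nilpotent in g if and only if pr_0(x) is ad-nilpotent in g. -/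
/-!
Let `V μ` be the generalized eigenspaces of `ad h`. Write `x = x₀ + x₊` with `x₀ = pr₀ x ∈ V 0`
and `x₊ ∈ ⨆_{n ≥ 1} V n`. Then `ad x₀` preserves every `V μ`, while `ad x₊` maps `V μ` into
`⨆_{n ≥ 1} V (μ + n)`. Hence `ad x` is block upper triangular, with diagonal part `ad x₀`, for the
decreasing filtrations `⨆_{n ≥ k} V (μ + n)` of the ladders `μ + ℕ`; and a block triangular
operator is nilpotent if and only if its diagonal part is. In characteristic zero the ladders
are infinite while only finitely many `V μ` are nonzero, so these filtrations are finite, and the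
pieces `V μ` and `⨆_{n ≥ 1} V (μ + n)` are independent.
-/

open Module.End

namespace Submodule

variable {ι R M : Type*} [AddMonoidWithOne ι] [Semiring R] [AddCommMonoid M] [Module R M]

def iSupShift (V : ι → Submodule R M) (μ : ι) (k : ℕ) : Submodule R M :=
  ⨆ (n : ℕ) (_ : k ≤ n), V (μ + n)

variable {V : ι → Submodule R M} {μ : ι} {k n : ℕ}

theorem le_iSupShift (h : k ≤ n) : V (μ + n) ≤ iSupShift V μ k :=
  le_iSup₂_of_le n h le_rfl

theorem iSupShift_antitone (V : ι → Submodule R M) (μ : ι) : Antitone (iSupShift V μ) :=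
  fun _ _ hkl => iSup₂_le fun _ hn => le_iSupShift (hkl.trans hn)

theorem iSupShift_add_le (n k : ℕ) : iSupShift V (μ + n) k ≤ iSupShift V μ (n + k) :=
  iSup₂_le fun m hm => by
    rw [add_assoc, ← Nat.cast_add]
    exact le_iSupShift (by omega)

theorem iSupShift_mono {W : ι → Submodule R M} (h : V ≤ W) :
    iSupShift V μ k ≤ iSupShift W μ k :=
  iSup₂_mono fun n _ => h (μ + n)

variable [IsLeftCancelAdd ι] [CharZero ι]

theorem disjoint_iSupShift (hV : iSupIndep V) (μ : ι) : Disjoint (V μ) (iSupShift V μ 1) :=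
  (hV μ).mono_right <| iSup₂_le fun n hn =>
    le_iSup₂_of_le (μ + n) (by simpa using Nat.one_le_iff_ne_zero.1 hn) le_rfl

theorem exists_iSupShift_eq_bot (hV : {μ | V μ ≠ ⊥}.Finite) (μ : ι) :
    ∃ k, iSupShift V μ k = ⊥ := by
  have hinj : Function.Injective fun n : ℕ => μ + n :=
    fun _ _ hab => Nat.cast_injective (add_left_cancel hab)
  obtain ⟨b, hb⟩ := (hV.preimage hinj.injOn).bddAbove
  refine ⟨b + 1, eq_bot_iff.2 <| iSup₂_le fun n hn => ?_⟩
  by_contra hne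
  have := hb fun h => hne h.le
  omega

end Submodule

open Submodule

section UpperTriangular

variable {ι R M : Type*} [AddMonoidWithOne ι] [CommRing R] [AddCommGroup M] [Module R M]
  {V : ι → Submodule R M} {A B : Module.End R M}

theorem iSupShift_le_comap_of_upperTriangular (hB : ∀ μ, ∀ v ∈ V μ, B v ∈ V μ)
    (hAB : ∀ μ, ∀ v ∈ V μ, (A - B) v ∈ iSupShift V μ 1) (μ : ι) (k : ℕ) :
    iSupShift V μ k ≤ (iSupShift V μ k).comap A :=
  iSup₂_le fun n hn v hv => by
    rw [mem_comap, ← sub_add_cancel (A v) (B v), ← LinearMap.sub_apply]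
    exact add_mem (iSupShift_antitone V μ (by omega) (iSupShift_add_le n 1 (hAB _ v hv)))
      (le_iSupShift hn (hB _ v hv))

theorem pow_sub_pow_apply_mem_iSupShift (hB : ∀ μ, ∀ v ∈ V μ, B v ∈ V μ)
    (hAB : ∀ μ, ∀ v ∈ V μ, (A - B) v ∈ iSupShift V μ 1) {μ : ι} {v : M} (hv : v ∈ V μ)
    (m : ℕ) : (A ^ m - B ^ m) v ∈ iSupShift V μ 1 := by
  induction m with
  | zero => simp
  | succ m ih =>
    have hsplit :
        (A ^ (m + 1) - B ^ (m + 1)) v = A ((A ^ m - B ^ m) v) + (A - B) ((B ^ m) v) := by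
      simp only [pow_succ', LinearMap.sub_apply, Module.End.mul_apply, map_sub]
      abel
    rw [hsplit]
    exact add_mem (iSupShift_le_comap_of_upperTriangular hB hAB μ 1 ih)
      (hAB μ _ (pow_apply_mem_of_forall_mem m (hB μ) v hv))

theorem iSupShift_le_comap_pow_of_upperTriangular (hB : ∀ μ, ∀ v ∈ V μ, B v ∈ V μ)
    (hAB : ∀ μ, ∀ v ∈ V μ, (A - B) v ∈ iSupShift V μ 1) {m : ℕ} (hm : B ^ m = 0) (μ : ι)
    (k : ℕ) : iSupShift V μ k ≤ (iSupShift V μ (k + 1)).comap (A ^ m) :=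
  iSup₂_le fun n hn v hv => by
    have := pow_sub_pow_apply_mem_iSupShift hB hAB hv m
    rw [hm, sub_zero] at this
    exact iSupShift_antitone V μ (by omega) (iSupShift_add_le n 1 this)

theorem pow_pow_apply_mem_iSupShift (hB : ∀ μ, ∀ v ∈ V μ, B v ∈ V μ)
    (hAB : ∀ μ, ∀ v ∈ V μ, (A - B) v ∈ iSupShift V μ 1) {m : ℕ} (hm : B ^ m = 0) {μ : ι}
    {v : M} (hv : v ∈ V μ) (j : ℕ) : ((A ^ m) ^ j) v ∈ iSupShift V μ j := by
  induction j with
  | zero => simpa using le_iSupShift (μ := μ) le_rfl (by simpa using hv)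
  | succ j ih =>
    rw [pow_succ', Module.End.mul_apply]
    exact iSupShift_le_comap_pow_of_upperTriangular hB hAB hm μ j ih

variable [IsNoetherian R M] [IsLeftCancelAdd ι] [CharZero ι]

theorem isNilpotent_iff_of_upperTriangular (hind : iSupIndep V) (htop : ⨆ μ, V μ = ⊤)
    (hB : ∀ μ, ∀ v ∈ V μ, B v ∈ V μ) (hAB : ∀ μ, ∀ v ∈ V μ, (A - B) v ∈ iSupShift V μ 1) :
    IsNilpotent A ↔ IsNilpotent B := by
  constructor
  · rintro ⟨m, hm⟩
    refine ⟨m, LinearMap.ker_eq_top.1 <| top_le_iff.1 <| htop ▸ iSup_le fun μ v hv => ?_⟩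
    have hdiff := pow_sub_pow_apply_mem_iSupShift hB hAB hv m
    rw [hm, zero_sub, LinearMap.neg_apply, neg_mem_iff] at hdiff
    exact disjoint_def.1 (disjoint_iSupShift hind μ) _
      (pow_apply_mem_of_forall_mem m (hB μ) v hv) hdiff
  · rintro ⟨m, hm⟩
    have hmax : ⊤ ≤ A.maxGenEigenspace 0 := htop ▸ iSup_le fun μ v hv => by
      obtain ⟨k, hk⟩ := exists_iSupShift_eq_bot (WellFoundedGT.finite_ne_bot_of_iSupIndep hind) μ
      have := pow_pow_apply_mem_iSupShift hB hAB hm hv k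
      rw [hk, mem_bot, ← pow_mul] at this
      exact (mem_maxGenEigenspace _ _ _).2 ⟨m * k, by simpa using this⟩
    exact isNilpotent_iff_of_finite.2 fun v => by simpa using hmax (mem_top (x := v))

end UpperTriangular

theorem Module.End.proj_mem_eigenspace_zero_and_sub_mem_iSupShift {R M : Type*} [CommRing R]
    [AddCommGroup M] [Module R M] {f : Module.End R M} {p : M →ₗ[R] M}
    (hp : ∀ (i : ℤ) (x : M), x ∈ f.eigenspace (i : R) → p x = if i = 0 then x else 0)
    {x : M} (hx : x ∈ ⨆ i : ℕ, f.eigenspace (i : R)) :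
    p x ∈ f.eigenspace 0 ∧ x - p x ∈ iSupShift f.eigenspace 0 1 := by
  refine iSup_induction _ (motive := fun x => p x ∈ f.eigenspace 0 ∧
    x - p x ∈ iSupShift f.eigenspace 0 1) hx (fun i a ha => ?_) (by simp) fun a b ha hb => ?_
  · have hpa := hp i a (by exact_mod_cast ha)
    rcases Nat.eq_zero_or_pos i with rfl | hi
    · simp_all
    · rw [hpa, if_neg (by exact_mod_cast hi.ne')]
      exact ⟨zero_mem _, by simpa using le_iSupShift (μ := (0 : R)) hi (by simpa using ha)⟩
  · rw [map_add, add_sub_add_comm]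
    exact ⟨add_mem ha.1 hb.1, add_mem ha.2 hb.2⟩

theorem LieAlgebra.lie_mem_iSupShift_maxGenEigenspace {R L : Type*} [CommRing R] [LieRing L]
    [LieAlgebra R L] {h y v : L} {ν μ : R} {k : ℕ}
    (hy : y ∈ iSupShift (ad R L h).maxGenEigenspace ν k)
    (hv : v ∈ (ad R L h).maxGenEigenspace μ) :
    ⁅y, v⁆ ∈ iSupShift (ad R L h).maxGenEigenspace (ν + μ) k := by
  have hmaps : iSupShift (ad R L h).maxGenEigenspace ν k ≤
      (iSupShift (ad R L h).maxGenEigenspace (μ + ν) k).comap (ad R L v) :=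
    iSup₂_le fun n hn u hu => le_iSupShift hn <| by
      rw [add_assoc]
      exact LieModule.lie_mem_maxGenEigenspace_toEnd hv hu
  rw [← lie_skew, add_comm]
  exact neg_mem (hmaps hy)

theorem isNilpotent_ad_iff_isNilpotent_ad_pr0_general
    {K : Type*} [Field K] [IsAlgClosed K] [CharZero K]
    {g : Type*} [LieRing g] [LieAlgebra K g] [FiniteDimensional K g]
    (h : g)
    (pr0 : g →ₗ[K] g)
    (hpr0 : ∀ (i : ℤ) (x : g), x ∈ eigenspace (LieAlgebra.ad K g h) (i : K) →
        pr0 x = if i = 0 then x else 0)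
    (x : g) (hx : x ∈ ⨆ i : ℕ, eigenspace (LieAlgebra.ad K g h) (i : K)) :
    IsNilpotent (LieAlgebra.ad K g x) ↔ IsNilpotent (LieAlgebra.ad K g (pr0 x)) := by
  obtain ⟨hx₀, hx₁⟩ := proj_mem_eigenspace_zero_and_sub_mem_iSupShift hpr0 hx
  refine isNilpotent_iff_of_upperTriangular (independent_maxGenEigenspace (LieAlgebra.ad K g h))
    (iSup_maxGenEigenspace_eq_top _) (fun μ v hv => ?_) fun μ v hv => ?_
  · rw [← zero_add μ]
    exact LieModule.lie_mem_maxGenEigenspace_toEnd (eigenspace_le_maxGenEigenspace hx₀) hv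
  · rw [← map_sub, LieAlgebra.ad_apply]
    simpa using LieAlgebra.lie_mem_iSupShift_maxGenEigenspace
      (iSupShift_mono (fun _ => eigenspace_le_maxGenEigenspace) hx₁) hv

/-- For an `sl2`-triple `(e, h, f)` in a finite-dimensional semisimple Lie algebra over an
algebraically closed field of characteristic zero, an element `x` of the non-negative part
`⊕_{i ≥ 0} g(h,i)` of the characteristic grading is ad-nilpotent if and only if its
projection `pr₀ x` onto `g(h,0)` (along the other eigenspaces) is ad-nilpotent. -/
theorem isNilpotent_ad_iff_isNilpotent_ad_pr0
    {K : Type*} [Field K] [IsAlgClosed K] [CharZero K]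
    {g : Type*} [LieRing g] [LieAlgebra K g] [FiniteDimensional K g]
    [LieAlgebra.IsSemisimple K g]
    (e h f : g) (he : ⁅h, e⁆ = (2 : K) • e) (hf : ⁅h, f⁆ = (-2 : K) • f) (hef : ⁅e, f⁆ = h)
    (pr0 : g →ₗ[K] g)
    (hpr0 : ∀ (i : ℤ) (x : g), x ∈ eigenspace (LieAlgebra.ad K g h) (i : K) →
        pr0 x = if i = 0 then x else 0)
    (x : g) (hx : x ∈ ⨆ i : ℕ, eigenspace (LieAlgebra.ad K g h) (i : K)) :
    IsNilpotent (LieAlgebra.ad K g x) ↔ IsNilpotent (LieAlgebra.ad K g (pr0 x)) :=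
  isNilpotent_ad_iff_isNilpotent_ad_pr0_general h pr0 hpr0 x hx
end

section
/- Let g be a finite-dimensional Lie algebra over an algebraically closed field K of characteristic 0. If g has a very nilpotent basis, then g is solvable. -/
/-!
By Engel's theorem it suffices that every `ad x` is nilpotent. The operators `ad z`, for `z` an
iterated bracket of the basis, form a set `S` of nilpotent endomorphisms that is closed under
commutators and spans `ad g`, so this is Jacobson's theorem on weakly closed sets: in a
finite-dimensional associative algebra the span of such a set consists of nilpotent elements.

Nilpotency of a subspace `P` is measured in the semiring of submodules (`P ^ n = ⊥`). Among the
subalgebras generated by subsets of `S`, take a maximal nilpotent one, `B`. If some `s ∈ S` lies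
outside `B`, commutating `s` repeatedly with generators of `B` must eventually land in `B`, because
long products of left and right multiplications by elements of `B` vanish; the last element
outside `B` is an `s' ∈ S` normalising `B`. Then `B` and `s'` generate a subalgebra contained in
`B * K[s'] + s' * K[s']`, which is again nilpotent, contradicting maximality.
-/

section IdemSemiring

variable {α : Type*} [IdemSemiring α]

theorem IsNilpotent.of_le {x y : α} (h : x ≤ y) (hy : IsNilpotent y) : IsNilpotent x := by
  obtain ⟨n, hn⟩ := hy
  refine ⟨n, ?_⟩
  rw [← bot_eq_zero, ← le_bot_iff, bot_eq_zero, ← hn]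
  gcongr

theorem isNilpotent_mul_of_mul_le_mul {b u : α} (huu : u * u ≤ u) (hub : u * b ≤ b * u)
    (hb : IsNilpotent b) : IsNilpotent (b * u) := by
  obtain ⟨N, hN⟩ := hb
  have hpow : ∀ k, (b * u) ^ (k + 1) ≤ b ^ (k + 1) * u := by
    intro k
    induction k with
    | zero => simp
    | succ k ih =>
      calc (b * u) ^ (k + 2) = (b * u) ^ (k + 1) * (b * u) := pow_succ _ _
        _ ≤ b ^ (k + 1) * (u * b) * u := by grw [ih]; simp only [mul_assoc, le_refl]
        _ ≤ b ^ (k + 1) * b * (u * u) := by grw [hub]; simp only [mul_assoc, le_refl]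
        _ ≤ b ^ (k + 2) * u := by grw [huu, ← pow_succ]
  refine ⟨N + 1, ?_⟩
  rw [← bot_eq_zero, ← le_bot_iff]
  grw [hpow, pow_succ, hN, zero_mul, zero_mul, bot_eq_zero]

theorem isNilpotent_sup_of_mul_le {y r : α}
    (hyy : y * y ≤ y) (hry : r * y ≤ y) (hyr : y * r ≤ y)
    (hy : IsNilpotent y) (hr : IsNilpotent r) : IsNilpotent (y ⊔ r) := by
  obtain ⟨N, hN⟩ := hy
  obtain ⟨m, hm⟩ := hr
  have hpow_mul : ∀ k, r ^ k * y ≤ y := by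
    intro k
    induction k with
    | zero => rw [pow_zero, one_mul]
    | succ k ih => rw [pow_succ', mul_assoc]; grw [ih, hry]
  have hsup_pow : ∀ k, (y ⊔ r) ^ k ≤ y ⊔ r ^ k := by
    intro k
    induction k with
    | zero => simp
    | succ k ih =>
      calc (y ⊔ r) ^ (k + 1) ≤ (y ⊔ r ^ k) * (y ⊔ r) := by rw [pow_succ]; gcongr
        _ = y * y ⊔ y * r ⊔ (r ^ k * y ⊔ r ^ (k + 1)) := by
            simp only [← add_eq_sup, add_mul, mul_add, pow_succ]; abel
        _ ≤ y ⊔ r ^ (k + 1) := by grw [hyy, hyr, hpow_mul k, sup_idem, ← sup_assoc, sup_idem]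
  refine ⟨m * N, ?_⟩
  rw [← bot_eq_zero, ← le_bot_iff]
  calc (y ⊔ r) ^ (m * N) ≤ (y ⊔ r ^ m) ^ N := by rw [pow_mul]; gcongr; exact hsup_pow m
    _ = ⊥ := by rw [hm, ← bot_eq_zero, sup_bot_eq, hN, bot_eq_zero]

/-- In the application `b` is a subalgebra, `u = K[s]` and `σ = K s`. -/
theorem exists_isNilpotent_mul_le_self_of_mul_le_mul {b σ u : α} (hbb : b * b ≤ b)
    (h1u : 1 ≤ u) (huu : u * u ≤ u) (hσu : σ ≤ u) (hub : u * b ≤ b * u) (huσ : u * σ ≤ σ * u)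
    (hb : IsNilpotent b) (hσ : IsNilpotent σ) :
    ∃ c, b ≤ c ∧ σ ≤ c ∧ c * c ≤ c ∧ IsNilpotent c := by
  have hyy : b * u * (b * u) ≤ b * u := calc
    b * u * (b * u) = b * (u * b) * u := by simp only [mul_assoc]
    _ ≤ b * b * (u * u) := by grw [hub]; simp only [mul_assoc, le_refl]
    _ ≤ b * u := by grw [hbb, huu]
  have hzy : σ * u * (b * u) ≤ b * u := calc
    σ * u * (b * u) ≤ u * u * b * u := by grw [hσu]; simp only [mul_assoc, le_refl]
    _ ≤ b * (u * u) := by grw [huu, hub, mul_assoc]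
    _ ≤ b * u := by grw [huu]
  have hyz : b * u * (σ * u) ≤ b * u := calc
    b * u * (σ * u) ≤ b * (u * u * u) := by grw [hσu]; simp only [mul_assoc, le_refl]
    _ ≤ b * u := by grw [huu, huu]
  have hzz : σ * u * (σ * u) ≤ σ * u := calc
    σ * u * (σ * u) ≤ σ * u * (u * u) := by gcongr
    _ ≤ σ * u := by grw [huu, mul_assoc, huu]
  refine ⟨b * u ⊔ σ * u, ?_, ?_, ?_, isNilpotent_sup_of_mul_le hyy hzy hyz
    (isNilpotent_mul_of_mul_le_mul huu hub hb) (isNilpotent_mul_of_mul_le_mul huu huσ hσ)⟩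
  · exact le_sup_of_le_left (le_mul_of_one_le_right' h1u)
  · exact le_sup_of_le_right (le_mul_of_one_le_right' h1u)
  · rw [← add_eq_sup, add_mul, mul_add, mul_add]
    grw [hyy, hyz, hzy, hzz]
    simp only [← add_assoc, add_idem, le_refl]

end IdemSemiring

section Jacobson

open Submodule

variable {R A : Type*} [CommRing R] [Ring A] [Algebra R A]

theorem Submodule.isNilpotent_of_mem {P : Submodule R A} (hP : IsNilpotent P) {x : A}
    (hx : x ∈ P) : IsNilpotent x := by
  obtain ⟨n, hn⟩ := hP
  exact ⟨n, by simpa [hn] using pow_mem_pow P hx n⟩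

theorem Submodule.map_mul_flip_pow_le (B : Submodule R A) (n : ℕ) :
    B.map (LinearMap.mul R A).flip ^ n ≤ (B ^ n).map (LinearMap.mul R A).flip := by
  induction n with
  | zero =>
    rw [pow_zero, pow_zero, one_le]
    exact ⟨1, one_le.mp le_rfl, LinearMap.ext fun x => mul_one x⟩
  | succ n ih =>
    rw [pow_succ]
    grw [ih]
    refine mul_le.mpr ?_
    rintro _ ⟨x, hx, rfl⟩ _ ⟨y, hy, rfl⟩
    exact ⟨y * x, by rw [pow_succ']; exact mul_mem_mul hy hx,
      LinearMap.ext fun z => (mul_assoc z y x).symm⟩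

theorem Submodule.isNilpotent_map_mul_sup_map_mul_flip {B : Submodule R A}
    (hB : IsNilpotent B) :
    IsNilpotent (B.map (LinearMap.mul R A) ⊔ B.map (LinearMap.mul R A).flip) := by
  obtain ⟨n, hn⟩ := hB
  have hcomm : Commute (B.map (LinearMap.mul R A)) (B.map (LinearMap.mul R A).flip) :=
    mul_comm_of_commute <| by
      rintro _ ⟨x, -, rfl⟩ _ ⟨y, -, rfl⟩
      exact LinearMap.commute_mulLeft_right x y
  have hleft : IsNilpotent (B.map (LinearMap.mul R A)) :=
    ⟨n, (B.map_pow (Algebra.lmul R A) n).symm.trans <| by rw [hn]; exact map_bot _⟩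
  have hright : IsNilpotent (B.map (LinearMap.mul R A).flip) :=
    ⟨n, le_bot_iff.mp <| (map_mul_flip_pow_le B n).trans <| by rw [hn]; exact (map_bot _).le⟩
  rw [← add_eq_sup]
  exact hcomm.isNilpotent_add hleft hright

theorem Submodule.exists_notMem_forall_commutator_mem {S T : Set A} {B : Submodule R A}
    (hB : IsNilpotent B) (hTB : T ⊆ B) (hST : ∀ x ∈ S, ∀ t ∈ T, x * t - t * x ∈ S)
    {s : A} (hs : s ∈ S) (hsB : s ∉ B) :
    ∃ s' ∈ S, s' ∉ B ∧ ∀ t ∈ T, s' * t - t * s' ∈ B := by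
  set D := B.map (LinearMap.mul R A) ⊔ B.map (LinearMap.mul R A).flip
  obtain ⟨M, hM⟩ := isNilpotent_map_mul_sup_map_mul_flip hB
  by_contra! h
  have hchain : ∀ k, ∃ f ∈ D ^ k, f s ∈ S ∧ f s ∉ B := by
    intro k
    induction k with
    | zero => exact ⟨1, one_le.mp (pow_zero D).ge, hs, hsB⟩
    | succ k ih =>
      obtain ⟨f, hf, hfS, hfB⟩ := ih
      obtain ⟨t, ht, htB⟩ := h _ hfS hfB
      have hadt : (LinearMap.mul R A).flip t - LinearMap.mul R A t ∈ D :=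
        sub_mem (mem_sup_right ⟨t, hTB ht, rfl⟩) (mem_sup_left ⟨t, hTB ht, rfl⟩)
      exact ⟨_, pow_succ' D k ▸ mul_mem_mul hadt hf, hST _ hfS t ht, htB⟩
  obtain ⟨f, hf, -, hfB⟩ := hchain M
  rw [hM, zero_eq_bot, mem_bot] at hf
  exact hfB (by rw [hf]; exact zero_mem B)

theorem NonUnitalAlgebra.commutator_mem_adjoin {T : Set A} {s : A}
    (h : ∀ t ∈ T, s * t - t * s ∈ adjoin R T) {b : A} (hb : b ∈ adjoin R T) :
    s * b - b * s ∈ adjoin R T := by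
  induction hb using NonUnitalAlgebra.adjoin_induction with
  | mem t ht => exact h t ht
  | add x y _ _ hx hy =>
    rw [show s * (x + y) - (x + y) * s = (s * x - x * s) + (s * y - y * s) by noncomm_ring]
    exact add_mem hx hy
  | zero => simp
  | mul x y hx' hy' hx hy =>
    rw [show s * (x * y) - x * y * s = (s * x - x * s) * y + x * (s * y - y * s) by noncomm_ring]
    exact add_mem (mul_mem hx hy') (mul_mem hx' hy)
  | smul r x _ hx =>
    rw [mul_smul_comm, smul_mul_assoc, ← smul_sub]
    exact SMulMemClass.smul_mem r hx

theorem Submodule.adjoin_singleton_mul_le {B : Submodule R A} {s : A}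
    (hsB : ∀ b ∈ B, s * b - b * s ∈ B) :
    (Algebra.adjoin R {s}).toSubmodule * B ≤ B * (Algebra.adjoin R {s}).toSubmodule := by
  set U := (Algebra.adjoin R {s}).toSubmodule
  have hBU : B ≤ B * U := fun b hb =>
    mul_one b ▸ mul_mem_mul hb (one_mem (Algebra.adjoin R {s}))
  suffices ∀ u ∈ Algebra.adjoin R {s}, span R {u} * B ≤ B * U from
    mul_le.mpr fun u hu b hb => this u hu (mul_mem_mul (mem_span_singleton_self u) hb)
  intro u hu
  induction hu using Algebra.adjoin_induction with
  | mem x hx =>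
    rw [Set.mem_singleton_iff.mp hx]
    intro y hy
    obtain ⟨b, hb, rfl⟩ := mem_span_singleton_mul.mp hy
    rw [← sub_add_cancel (s * b) (b * s)]
    exact add_mem (hBU (hsB b hb)) (mul_mem_mul hb (Algebra.self_mem_adjoin_singleton R s))
  | algebraMap r =>
    calc span R {algebraMap R A r} * B ≤ 1 * B := by
          gcongr; exact (span_singleton_le_iff_mem _ _).mpr (algebraMap_mem r)
      _ ≤ B * U := by rw [one_mul]; exact hBU
  | add x y _ _ hx hy =>
    calc span R {x + y} * B ≤ (span R {x} ⊔ span R {y}) * B := by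
          gcongr
          exact (span_singleton_le_iff_mem _ _).mpr
            (add_mem (mem_sup_left (mem_span_singleton_self x))
              (mem_sup_right (mem_span_singleton_self y)))
      _ ≤ B * U := by rw [sup_mul]; exact sup_le hx hy
  | mul x y _ _ hx hy =>
    calc span R {x * y} * B = span R {x} * (span R {y} * B) := by
          rw [← mul_assoc, span_mul_span, Set.singleton_mul_singleton]
      _ ≤ span R {x} * B * U := by grw [hy, mul_assoc]
      _ ≤ B * U := by grw [hx, mul_assoc, (Subalgebra.isIdempotentElem_toSubmodule _).eq]

theorem NonUnitalSubalgebra.isNilpotent_adjoin_insert {B : NonUnitalSubalgebra R A}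
    (hB : IsNilpotent B.toSubmodule) {s : A} (hs : IsNilpotent s)
    (hsB : ∀ b ∈ B, s * b - b * s ∈ B) :
    IsNilpotent (NonUnitalAlgebra.adjoin R (insert s (B : Set A))).toSubmodule := by
  have hσ : IsNilpotent (span R {s}) := by
    obtain ⟨m, hm⟩ := hs
    exact ⟨m, by rw [span_pow, Set.singleton_pow, hm, span_zero_singleton, zero_eq_bot]⟩
  have hUσ : (Algebra.adjoin R {s}).toSubmodule * span R {s} ≤
      span R {s} * (Algebra.adjoin R {s}).toSubmodule :=
    le_of_eq <| mul_comm_of_commute fun u hu x hx => by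
      obtain ⟨c, rfl⟩ := mem_span_singleton.mp hx
      exact (Algebra.commute_of_mem_adjoin_self hu).symm.smul_right c
  obtain ⟨C, hBC, hσC, hCC, hC⟩ := exists_isNilpotent_mul_le_self_of_mul_le_mul
    (mul_le.mpr fun _ hx _ hy => B.mul_mem hx hy) (one_le.mpr (Algebra.adjoin R {s}).one_mem)
    (Subalgebra.isIdempotentElem_toSubmodule _).le
    ((span_singleton_le_iff_mem _ _).mpr (Algebra.self_mem_adjoin_singleton R s))
    (adjoin_singleton_mul_le hsB) hUσ hB hσ
  refine hC.of_le (NonUnitalAlgebra.adjoin_le (S := C.toNonUnitalSubalgebra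
    fun x y hx hy => hCC (mul_mem_mul hx hy)) ?_)
  exact Set.insert_subset (hσC (mem_span_singleton_self s)) hBC

theorem isNilpotent_of_mem_span_of_commutator_mem [IsNoetherian R A] {S : Set A}
    (hS : ∀ x ∈ S, ∀ y ∈ S, x * y - y * x ∈ S) (hnil : ∀ x ∈ S, IsNilpotent x)
    {x : A} (hx : x ∈ span R S) : IsNilpotent x := by
  obtain ⟨_, ⟨T, hTS, rfl, hT⟩, hmax⟩ := set_has_maximal_iff_noetherian.mpr ‹_›
    {P | ∃ T ⊆ S, P = (NonUnitalAlgebra.adjoin R T).toSubmodule ∧ IsNilpotent P}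
    ⟨_, ∅, Set.empty_subset S, rfl, ⟨1, by
      rw [pow_one, NonUnitalAlgebra.adjoin_empty, NonUnitalAlgebra.toSubmodule_bot,
        zero_eq_bot]⟩⟩
  set B := NonUnitalAlgebra.adjoin R T
  suffices hSB : S ⊆ B from isNilpotent_of_mem hT (span_le.mpr hSB hx)
  intro s hs
  by_contra hsB
  obtain ⟨s', hs'S, hs'B, hs'T⟩ := exists_notMem_forall_commutator_mem hT
    (NonUnitalAlgebra.subset_adjoin R) (fun x hx t ht => hS x hx t (hTS ht)) hs hsB
  have hB' : IsNilpotent (NonUnitalAlgebra.adjoin R (insert s' T)).toSubmodule :=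
    (NonUnitalSubalgebra.isNilpotent_adjoin_insert hT (hnil s' hs'S)
      fun b hb => NonUnitalAlgebra.commutator_mem_adjoin hs'T hb).of_le
      (NonUnitalAlgebra.adjoin_mono (Set.insert_subset_insert (NonUnitalAlgebra.subset_adjoin R)))
  refine hmax _ ⟨insert s' T, Set.insert_subset hs'S hTS, rfl, hB'⟩ (lt_of_le_of_ne ?_ ?_)
  · exact NonUnitalAlgebra.adjoin_mono (Set.subset_insert s' T)
  · intro h
    exact hs'B (h ▸ NonUnitalAlgebra.subset_adjoin R (Set.mem_insert s' T))

end Jacobson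

theorem isSolvable_of_veryNilpotentBasis_general
    {K : Type*} [Field K]
    {g : Type*} [LieRing g] [LieAlgebra K g] [FiniteDimensional K g]
    (hvnb : ∃ (n : ℕ) (b : Module.Basis (Fin n) K g),
        ∀ z : g, IsIterBracket (⇑b) z → IsNilpotent (LieAlgebra.ad K g z)) :
    LieAlgebra.IsSolvable g := by
  obtain ⟨n, b, hb⟩ := hvnb
  set S := LieAlgebra.ad K g '' {z | IsIterBracket b z}
  have hS : ∀ x ∈ S, ∀ y ∈ S, x * y - y * x ∈ S := by
    rintro _ ⟨u, hu, rfl⟩ _ ⟨v, hv, rfl⟩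
    exact ⟨⁅u, v⁆, hu.bracket hv, LinearMap.ext fun w => by simp⟩
  have hspan (x : g) : LieAlgebra.ad K g x ∈ Submodule.span K S := by
    have hx : LieAlgebra.ad K g x ∈
        (Submodule.span K (Set.range b)).map (LieAlgebra.ad K g : g →ₗ[K] Module.End K g) :=
      Submodule.mem_map_of_mem (b.span_eq ▸ Submodule.mem_top)
    rw [Submodule.map_span] at hx
    exact Submodule.span_mono (Set.image_mono (Set.range_subset_iff.mpr IsIterBracket.base)) hx
  have hnil : LieRing.IsNilpotent g := LieAlgebra.isNilpotent_iff_forall.mpr fun x =>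
    isNilpotent_of_mem_span_of_commutator_mem hS (by rintro _ ⟨z, hz, rfl⟩; exact hb z hz)
      (hspan x)
  exact LieAlgebra.isSolvable_of_isNilpotent g

/-- A finite-dimensional Lie algebra over an algebraically closed field of characteristic
zero which has a very nilpotent basis is solvable. -/
theorem isSolvable_of_veryNilpotentBasis
    {K : Type*} [Field K] [IsAlgClosed K] [CharZero K]
    {g : Type*} [LieRing g] [LieAlgebra K g] [FiniteDimensional K g]
    (hvnb : ∃ (n : ℕ) (b : Module.Basis (Fin n) K g),
        ∀ z : g, IsIterBracket (⇑b) z → IsNilpotent (LieAlgebra.ad K g z)) :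
    LieAlgebra.IsSolvable g :=
  isSolvable_of_veryNilpotentBasis_general hvnb
end

section
/- Let g be a finite-dimensional Lie algebra over an algebraically closed field K of characteristic 0 and let y_1,…,y_n ∈ g. If every element of the set I(y_1,…,y_n) of iterated brackets of y_1,…,y_n is ad-nilpotent in g, then the Lie subalgebra of g generated by y_1,…,y_n is a nilpotent Lie algebra. -/
open LieAlgebra LieModule LieSubalgebra Module

lemma LieModule.exists_mem_ne_zero_forall_lie_eq_zero {L M : Type*} [LieRing L]
    [AddCommGroup M] [LieRingModule L M] [IsNilpotent L M] {X : Set L} {T : Set M}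
    (hT : ∀ x ∈ X, ∀ m ∈ T, ⁅x, m⁆ ∈ T) (hT₀ : ∃ m ∈ T, m ≠ 0) :
    ∃ m ∈ T, m ≠ 0 ∧ ∀ x ∈ X, ⁅x, m⁆ = 0 := by
  obtain ⟨k, hk⟩ := IsNilpotent.nilpotent_int (L := L) (M := M)
  by_contra! h
  have hlcs : ∀ j, ∃ m ∈ T, m ≠ 0 ∧ m ∈ lowerCentralSeries ℤ L M j := by
    intro j
    induction j with
    | zero =>
      obtain ⟨m, hm, hm₀⟩ := hT₀
      exact ⟨m, hm, hm₀, LieSubmodule.mem_top m⟩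
    | succ j ih =>
      obtain ⟨m, hm, hm₀, hmj⟩ := ih
      obtain ⟨x, hx, hxm⟩ := h m hm hm₀
      refine ⟨_, hT x hx m hm, hxm, ?_⟩
      rw [lowerCentralSeries_succ]
      exact LieSubmodule.lie_mem_lie (LieSubmodule.mem_top x) hmj
  obtain ⟨m, -, hm₀, hmk⟩ := hlcs k
  rw [hk, LieSubmodule.mem_bot] at hmk
  exact hm₀ hmk

namespace LieSubalgebra

variable {R L : Type*} [CommRing R] [LieRing L] [LieAlgebra R L] {H : LieSubalgebra R L}

lemma lieSpan_preimage_coe_eq_top {S : Set L} (hHS : H ≤ lieSpan R L (S ∩ H)) :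
    lieSpan R H (((↑) : H → L) ⁻¹' S) = ⊤ := by
  rw [eq_top_iff]
  rintro ⟨x, hx⟩ -
  have : x ∈ (lieSpan R H (((↑) : H → L) ⁻¹' S)).map H.incl := by
    rw [map_lieSpan, coe_incl, Set.image_preimage_eq_inter_range, Subtype.range_coe_subtype]
    exact hHS hx
  obtain ⟨z, hz, rfl⟩ := this
  exact hz

lemma mem_normalizer_of_forall_lie_mem {T : Set L} (hTH : T ⊆ H) (hHT : H ≤ lieSpan R L T)
    {s : L} (hs : ∀ t ∈ T, ⁅t, s⁆ ∈ H) : s ∈ H.normalizer := by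
  rw [mem_normalizer_iff']
  intro y hy
  have hyT := hHT hy
  clear hy
  induction hyT using lieSpan_induction with
  | mem t ht => exact hs t ht
  | zero => rw [zero_lie]; exact H.zero_mem
  | add a b _ _ ha hb => rw [add_lie]; exact H.add_mem ha hb
  | smul c a _ ha => rw [smul_lie]; exact H.smul_mem c ha
  | lie a b ha hb iha ihb =>
    rw [lie_lie]
    exact H.sub_mem (H.lie_mem (lieSpan_le.mpr hTH ha) ihb) (H.lie_mem (lieSpan_le.mpr hTH hb) iha)

lemma exists_mem_normalizer_notMem [IsNilpotent H (L ⧸ H.toLieSubmodule)] {S : Set L}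
    (hS : ∀ x ∈ S, ∀ y ∈ S, ⁅x, y⁆ ∈ S) (hSH : ¬ S ⊆ H) (hHS : H ≤ lieSpan R L (S ∩ H)) :
    ∃ s ∈ S, s ∉ H ∧ s ∈ H.normalizer := by
  let T : Set (L ⧸ H.toLieSubmodule) := LieSubmodule.Quotient.mk '' S
  have hT : ∀ x ∈ {x : H | (x : L) ∈ S}, ∀ m ∈ T, ⁅x, m⁆ ∈ T := by
    rintro x hx _ ⟨s, hs, rfl⟩
    exact ⟨⁅(x : L), s⁆, hS _ hx _ hs, rfl⟩
  have hT₀ : ∃ m ∈ T, m ≠ 0 := by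
    obtain ⟨s, hs, hsH⟩ := Set.not_subset.mp hSH
    exact ⟨_, ⟨s, hs, rfl⟩, mt LieSubmodule.Quotient.mk_eq_zero'.mp hsH⟩
  obtain ⟨_, ⟨s, hs, rfl⟩, hs₀, hsH⟩ := exists_mem_ne_zero_forall_lie_eq_zero hT hT₀
  refine ⟨s, hs, fun h => hs₀ (LieSubmodule.Quotient.mk_eq_zero'.mpr h),
    mem_normalizer_of_forall_lie_mem Set.inter_subset_right hHS fun t ht => ?_⟩
  exact LieSubmodule.Quotient.mk_eq_zero'.mp (hsH ⟨t, ht.2⟩ ht.1)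

lemma exists_span_singleton_sup_eq_top [IsNoetherian R L] [Nontrivial L] {S : Set L}
    (hS : ∀ x ∈ S, ∀ y ∈ S, ⁅x, y⁆ ∈ S) (hSL : lieSpan R L S = ⊤)
    (hquot : ∀ H : LieSubalgebra R L, H ≠ ⊤ → H ≤ lieSpan R L (S ∩ H) →
      IsNilpotent H (L ⧸ H.toLieSubmodule)) :
    ∃ H : LieSubalgebra R L, H ≠ ⊤ ∧ H ≤ lieSpan R L (S ∩ H) ∧
      ∃ s ∈ S, s ∈ H.normalizer ∧ R ∙ s ⊔ H.toSubmodule = ⊤ := by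
  have hbot : (⊥ : LieSubalgebra R L) ≠ ⊤ := by simp [← toSubmodule_inj]
  obtain ⟨H, ⟨hH, hHS⟩, hmax⟩ := wellFounded_gt.has_min
    {H : LieSubalgebra R L | H ≠ ⊤ ∧ H ≤ lieSpan R L (S ∩ H)} ⟨⊥, hbot, bot_le⟩
  have := hquot H hH hHS
  obtain ⟨s, hsS, hsH, hsN⟩ := H.exists_mem_normalizer_notMem hS
    (fun h => hH (eq_top_iff.mpr (hSL ▸ lieSpan_le.mpr h))) hHS
  let H' : LieSubalgebra R L :=
    { R ∙ s ⊔ H.toSubmodule with lie_mem' := lie_mem_sup_of_mem_normalizer hsN }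
  have hsH' : s ∈ H' := Submodule.mem_sup_left (Submodule.mem_span_singleton_self s)
  have hHH' : H < H' :=
    SetLike.lt_iff_le_and_exists.mpr ⟨fun _ hx => Submodule.mem_sup_right hx, s, hsH', hsH⟩
  have hH'S : H' ≤ lieSpan R L (S ∩ H') := by
    rw [← toSubmodule_le_toSubmodule]
    refine sup_le ((Submodule.span_singleton_le_iff_mem _ _).mpr (subset_lieSpan ⟨hsS, hsH'⟩)) ?_
    exact hHS.trans (lieSpan_mono (Set.inter_subset_inter_right S hHH'.le))
  have hH' : H' = ⊤ := by
    by_contra hne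
    exact hmax H' ⟨hne, hH'S⟩ hHH'
  exact ⟨H, hH, hHS, s, hsS, hsN, congrArg toSubmodule hH'⟩

end LieSubalgebra

universe v

-- `L` and `M` share a universe because the induction hypothesis is also applied to `L ⧸ H`.
theorem LieModule.isNilpotent_of_lieSpan_eq_top {K : Type*} [Field K] {L M : Type v}
    [LieRing L] [LieAlgebra K L] [FiniteDimensional K L]
    [AddCommGroup M] [Module K M] [LieRingModule L M] [LieModule K L M]
    {S : Set L} (hS : ∀ x ∈ S, ∀ y ∈ S, ⁅x, y⁆ ∈ S) (hSL : lieSpan K L S = ⊤)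
    (had : ∀ x ∈ S, _root_.IsNilpotent (ad K L x))
    (hM : ∀ x ∈ S, _root_.IsNilpotent (toEnd K L M x)) : IsNilpotent L M := by
  induction hd : finrank K L using Nat.strong_induction_on generalizing L M with
  | _ d ih =>
  rcases subsingleton_or_nontrivial L with hL | hL
  · infer_instance
  have ih_sub : ∀ H : LieSubalgebra K L, H ≠ ⊤ → H ≤ lieSpan K L (S ∩ H) →
      ∀ (N : Type v) [AddCommGroup N] [Module K N] [LieRingModule H N] [LieModule K H N],
      (∀ x : H, (x : L) ∈ S → _root_.IsNilpotent (toEnd K H N x)) → IsNilpotent H N := by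
    intro H hH hHS N _ _ _ _ hN
    have hdim : finrank K H < d := hd ▸ Submodule.finrank_lt (by simp [hH])
    exact ih _ hdim (fun x hx y hy => hS _ hx _ hy) (lieSpan_preimage_coe_eq_top hHS)
      (fun x hx => H.isNilpotent_ad_of_isNilpotent_ad (had _ hx)) hN rfl
  obtain ⟨H, hH, hHS, s, hsS, hsN, hsH⟩ := exists_span_singleton_sup_eq_top hS hSL
    fun H hH hHS => ih_sub H hH hHS (L ⧸ H.toLieSubmodule) fun x hx =>
      Module.End.IsNilpotent.mapQ (f := ad K L x) (fun _ hy => H.lie_mem x.2 hy) (had _ hx)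
  have hnorm : H.normalizer = ⊤ := by
    rw [eq_top_iff, ← toSubmodule_le_toSubmodule, top_toSubmodule, ← hsH]
    exact sup_le ((Submodule.span_singleton_le_iff_mem _ _).mpr hsN) H.le_normalizer
  obtain ⟨I, rfl⟩ := H.exists_lieIdeal_coe_eq_iff.mpr
    fun x y hy => ideal_in_normalizer (hnorm ▸ mem_top x) hy
  exact LieSubmodule.isNilpotentOfIsNilpotentSpanSupEqTop hsH (hM s hsS)
    (ih_sub I hH hHS M fun x hx => hM _ hx)

theorem lieSpan_isNilpotent_of_iterBrackets_adNilpotent_general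
    {K : Type*} [Field K]
    {g : Type*} [LieRing g] [LieAlgebra K g] [FiniteDimensional K g]
    {n : ℕ} (y : Fin n → g)
    (hy : ∀ z : g, IsIterBracket y z → IsNilpotent (LieAlgebra.ad K g z)) :
    LieRing.IsNilpotent (LieSubalgebra.lieSpan K g (Set.range y)) := by
  set L := lieSpan K g (Set.range y)
  have had : ∀ x : L, IsIterBracket y x → IsNilpotent (ad K L x) :=
    fun x hx => L.isNilpotent_ad_of_isNilpotent_ad (hy x hx)
  refine LieModule.isNilpotent_of_lieSpan_eq_top (S := {x : L | IsIterBracket y x})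
    (fun _ hu _ hv => hu.bracket hv) ?_ had had
  rw [eq_top_iff, ← lieSpan_lieSpan_coe_preimage]
  refine lieSpan_mono ?_
  rintro x ⟨i, hi⟩
  change IsIterBracket y x
  rw [← hi]
  exact IsIterBracket.base i

/-- If all iterated brackets of `y₁, …, yₙ` are ad-nilpotent in a finite-dimensional Lie
algebra over an algebraically closed field of characteristic zero, then the Lie subalgebra
generated by `y₁, …, yₙ` is nilpotent. -/
theorem lieSpan_isNilpotent_of_iterBrackets_adNilpotent
    {K : Type*} [Field K] [IsAlgClosed K] [CharZero K]
    {g : Type*} [LieRing g] [LieAlgebra K g] [FiniteDimensional K g]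
    {n : ℕ} (y : Fin n → g)
    (hy : ∀ z : g, IsIterBracket y z → IsNilpotent (LieAlgebra.ad K g z)) :
    LieRing.IsNilpotent (LieSubalgebra.lieSpan K g (Set.range y)) :=
  lieSpan_isNilpotent_of_iterBrackets_adNilpotent_general y hy
end

section
/- Let g be a finite-dimensional Lie algebra over an algebraically closed field K of characteristic 0 and let y_1,…,y_n ∈ g. If every iterated bracket of y_1,…,y_n of depth at least 2 is ad-nilpotent in g, then the Lie subalgebra k of g generated by y_1,…,y_n has nilpotent derived subalgebra [k,k]; in particular, k is solvable. -/
/-!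
A bracket of two iterated brackets of `y₁, …, yₙ` has depth at least `2`, so `[k, k]` lies in the
span of the set `S` of deep iterated brackets. `S` is closed under the bracket and consists of
ad-nilpotent elements, so by Jacobson's theorem on Lie sets of nilpotent operators every element
of its span is ad-nilpotent; Engel's theorem then makes `[k, k]` nilpotent, and `k` is solvable
because `k / [k, k]` is abelian.

Jacobson's theorem follows the maximality argument behind Engel's theorem. Take a maximal
subalgebra `T` spanned by elements of `S` and acting nilpotently on `L`. If no element of `S \ T`
normalised `T`, an element of `S \ T` could be bracketed with elements of `S ∩ T` indefinitely
without entering `T`, contradicting the nilpotency of the action of `T`. So some `w ∈ S \ T`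
normalises `T`; as `T` is then an ideal of codimension one in `T + K w` and `ad w` is
nilpotent, `T + K w` is a larger subalgebra of the same kind.
-/

/-- `IterBracketDepth y z d` means that `z` is an iterated bracket of the `y i` of depth
`d`: each `y i` is an iterated bracket of depth `1`, and if `u`, `v` are iterated brackets
of depths `du`, `dv`, then `⁅u, v⁆` is an iterated bracket of depth `max du dv + 1`. -/
inductive IterBracketDepth {g : Type*} [LieRing g] {n : ℕ} (y : Fin n → g) : g → ℕ → Prop
  | base (i : Fin n) : IterBracketDepth y (y i) 1
  | bracket {u v : g} {du dv : ℕ} : IterBracketDepth y u du → IterBracketDepth y v dv →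
      IterBracketDepth y ⁅u, v⁆ (max du dv + 1)

theorem lie_mem_span_of_forall_lie_mem {R L : Type*} [CommRing R] [LieRing L] [LieAlgebra R L]
    {s t u : Set L} (h : ∀ a ∈ s, ∀ b ∈ t, ⁅a, b⁆ ∈ u) {a b : L}
    (ha : a ∈ Submodule.span R s) (hb : b ∈ Submodule.span R t) :
    ⁅a, b⁆ ∈ Submodule.span R u := by
  have := Submodule.apply_mem_map₂
    (LinearMap.mk₂ R (⁅·, ·⁆) add_lie smul_lie lie_add lie_smul) ha hb
  rw [Submodule.map₂_span_span] at this
  refine Submodule.span_mono ?_ this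
  rintro _ ⟨a, ha, b, hb, rfl⟩
  exact h a ha b hb

namespace LieSubalgebra

open LieModule LieAlgebra

variable {R L : Type*} [CommRing R] [LieRing L] [LieAlgebra R L]

theorem coe_mem_span_of_mem_derivedSeries_one {H : LieSubalgebra R L} {s u : Set L}
    (hH : (H : Submodule R L) ≤ Submodule.span R s) (h : ∀ a ∈ s, ∀ b ∈ s, ⁅a, b⁆ ∈ u) {x : H}
    (hx : x ∈ derivedSeries R H 1) : (x : L) ∈ Submodule.span R u := by
  suffices (derivedSeries R H 1).toSubmodule ≤
      (Submodule.span R u).comap H.incl.toLinearMap from this hx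
  rw [derivedSeries_def, derivedSeriesOfIdeal_succ, derivedSeriesOfIdeal_zero,
    LieSubmodule.lieIdeal_oper_eq_linear_span', Submodule.span_le]
  rintro _ ⟨a, -, b, -, rfl⟩
  exact lie_mem_span_of_forall_lie_mem h (hH a.2) (hH b.2)

theorem exists_mem_normalizer_of_isNilpotent {S : Set L} (hS : ∀ a ∈ S, ∀ b ∈ S, ⁅a, b⁆ ∈ S)
    (T : LieSubalgebra R L) (hT : (T : Submodule R L) ≤ Submodule.span R (S ∩ T))
    [IsNilpotent T L] {w₀ : L} (hw₀S : w₀ ∈ S) (hw₀T : w₀ ∉ T) :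
    ∃ w ∈ S, w ∉ T ∧ w ∈ T.normalizer := by
  by_contra! h
  have h_step : ∀ w ∈ S, w ∉ T → ∃ c ∈ S ∩ T, ⁅c, w⁆ ∉ T := by
    intro w hwS hwT
    by_contra! hc
    refine h w hwS hwT ((T.mem_normalizer_iff' w).mpr fun c hcT ↦ ?_)
    have := lie_mem_span_of_forall_lie_mem (R := R) (t := {w}) (u := T)
      (by rintro a ha _ rfl; exact hc a ha) (hT hcT) (Submodule.subset_span rfl)
    rwa [← coe_toSubmodule, Submodule.span_eq] at this
  have h_chain : ∀ m, ∃ w ∈ S, w ∉ T ∧ w ∈ lowerCentralSeries R T L m := by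
    intro m
    induction m with
    | zero => exact ⟨w₀, hw₀S, hw₀T, LieSubmodule.mem_top _⟩
    | succ m ih =>
      obtain ⟨w, hwS, hwT, hwm⟩ := ih
      obtain ⟨c, ⟨hcS, hcT⟩, hcw⟩ := h_step w hwS hwT
      refine ⟨⁅c, w⁆, hS c hcS w hwS, hcw, ?_⟩
      rw [lowerCentralSeries_succ]
      exact LieSubmodule.lie_mem_lie (x := (⟨c, hcT⟩ : T)) (LieSubmodule.mem_top _) hwm
  obtain ⟨N, hN⟩ := IsNilpotent.nilpotent R T L
  obtain ⟨w, -, hwT, hwN⟩ := h_chain N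
  rw [hN, LieSubmodule.mem_bot] at hwN
  exact hwT (hwN ▸ T.zero_mem)

theorem exists_isNilpotent_of_mem_normalizer [IsNoetherian R L] (T : LieSubalgebra R L)
    [IsNilpotent T L] {w : L} (hw : w ∈ T.normalizer) (hwn : _root_.IsNilpotent (ad R L w)) :
    ∃ T' : LieSubalgebra R L, (T' : Submodule R L) = R ∙ w ⊔ T ∧ IsNilpotent T' L := by
  let T' : LieSubalgebra R L :=
    { R ∙ w ⊔ (T : Submodule R L) with lie_mem' := fun {_ _} ↦ lie_mem_sup_of_mem_normalizer hw }
  refine ⟨T', rfl, ?_⟩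
  have hwT' : w ∈ T' := Submodule.mem_sup_left (Submodule.mem_span_singleton_self w)
  have hTT' : T ≤ T' := (toSubmodule_le_toSubmodule T T').mp le_sup_right
  have hT' : T' ≤ T.normalizer := by
    rw [← toSubmodule_le_toSubmodule]
    exact sup_le ((Submodule.span_singleton_le_iff_mem _ _).mpr hw) T.le_normalizer
  obtain ⟨I, hI⟩ := exists_nested_lieIdeal_ofLe_normalizer hTT' hT'
  have hI_top : R ∙ (⟨w, hwT'⟩ : T') ⊔ I.toSubmodule = ⊤ := by
    rw [← LieIdeal.toLieSubalgebra_toSubmodule R T' I, hI]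
    apply Submodule.map_injective_of_injective (T' : Submodule R L).injective_subtype
    simp only [coe_ofLe, Submodule.map_sup, Submodule.map_subtype_range_inclusion,
      Submodule.map_top, Submodule.range_subtype]
    rw [Submodule.map_subtype_span_singleton]
  have hI_nil : IsNilpotent I L := by
    rw [isNilpotent_iff_forall' (R := R)]
    rintro ⟨x, hx⟩
    have hxT : (x : L) ∈ T := by
      rwa [← LieSubmodule.mem_toSubmodule, ← LieIdeal.toLieSubalgebra_toSubmodule R T' I, hI,
        mem_toSubmodule, mem_ofLe] at hx
    exact isNilpotent_toEnd_of_isNilpotent R T L ⟨x, hxT⟩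
  exact LieSubmodule.isNilpotentOfIsNilpotentSpanSupEqTop hI_top hwn hI_nil

theorem isNilpotent_ad_of_mem_span [IsNoetherian R L] {S : Set L}
    (hS : ∀ a ∈ S, ∀ b ∈ S, ⁅a, b⁆ ∈ S) (hnil : ∀ s ∈ S, _root_.IsNilpotent (ad R L s))
    {x : L} (hx : x ∈ Submodule.span R S) : _root_.IsNilpotent (ad R L x) := by
  let P : LieSubalgebra R L → Prop := fun T ↦
    (T : Submodule R L) ≤ Submodule.span R (S ∩ T) ∧ IsNilpotent T L
  have hP_bot : P ⊥ := by
    refine ⟨fun x hx ↦ ?_, (isNilpotent_iff_forall' (R := R)).mpr fun ⟨x, hx⟩ ↦ ?_⟩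
    · rw [(mem_bot x).mp hx]; exact zero_mem _
    · obtain rfl := (mem_bot x).mp hx
      exact ⟨1, by ext; simp⟩
  obtain ⟨T, ⟨hT, hT_nil⟩, hT_max⟩ := wellFounded_gt.has_min {T | P T} ⟨⊥, hP_bot⟩
  have hST : S ⊆ T := by
    intro w₀ hw₀S
    by_contra hw₀T
    obtain ⟨w, hwS, hwT, hwN⟩ := exists_mem_normalizer_of_isNilpotent hS T hT hw₀S hw₀T
    obtain ⟨T', hT', hT'_nil⟩ := exists_isNilpotent_of_mem_normalizer T hwN (hnil w hwS)
    have hTT' : T ≤ T' := by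
      rw [← toSubmodule_le_toSubmodule, hT']; exact le_sup_right
    have hwT' : w ∈ T' := by
      rw [← mem_toSubmodule, hT']
      exact Submodule.mem_sup_left (Submodule.mem_span_singleton_self w)
    refine hT_max T' ⟨?_, hT'_nil⟩ (SetLike.lt_iff_le_and_exists.mpr ⟨hTT', w, hwT', hwT⟩)
    rw [hT']
    exact sup_le
      ((Submodule.span_singleton_le_iff_mem _ _).mpr (Submodule.subset_span ⟨hwS, hwT'⟩))
      (hT.trans (Submodule.span_mono (Set.inter_subset_inter_right S hTT')))
  exact isNilpotent_toEnd_of_isNilpotent R T L ⟨x, Submodule.span_le.mpr hST hx⟩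

end LieSubalgebra

theorem LieAlgebra.isSolvable_of_isSolvable_derivedSeries_one {R L : Type*} [CommRing R]
    [LieRing L] [LieAlgebra R L] [IsSolvable (derivedSeries R L 1)] : IsSolvable L := by
  obtain ⟨m, hm⟩ := IsSolvable.solvable R (derivedSeries R L 1)
  rw [LieIdeal.derivedSeries_eq_bot_iff] at hm
  refine IsSolvable.mk (R := R) (k := m + 1) ?_
  rwa [derivedSeries_def, derivedSeriesOfIdeal_add]

section IterBrackets

variable {g : Type*} [LieRing g] {n : ℕ} (y : Fin n → g)

def iterBrackets : Set g := {z | ∃ d, IterBracketDepth y z d}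

def deepIterBrackets : Set g := {z | ∃ d, 2 ≤ d ∧ IterBracketDepth y z d}

variable {y}

theorem IterBracketDepth.one_le {z : g} {d : ℕ} (h : IterBracketDepth y z d) : 1 ≤ d := by
  induction h <;> omega

theorem lie_mem_deepIterBrackets {u v : g} (hu : u ∈ iterBrackets y) (hv : v ∈ iterBrackets y) :
    ⁅u, v⁆ ∈ deepIterBrackets y := by
  obtain ⟨du, hu⟩ := hu
  obtain ⟨dv, hv⟩ := hv
  exact ⟨max du dv + 1, by have := hu.one_le; omega, hu.bracket hv⟩

theorem deepIterBrackets_subset_iterBrackets : deepIterBrackets y ⊆ iterBrackets y :=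
  fun _ ⟨d, _, hz⟩ ↦ ⟨d, hz⟩

theorem lie_mem_deepIterBrackets_of_mem_deep {u v : g} (hu : u ∈ deepIterBrackets y)
    (hv : v ∈ deepIterBrackets y) : ⁅u, v⁆ ∈ deepIterBrackets y :=
  lie_mem_deepIterBrackets (deepIterBrackets_subset_iterBrackets hu)
    (deepIterBrackets_subset_iterBrackets hv)

theorem lieSpan_range_le_span_iterBrackets (R : Type*) [CommRing R] [LieAlgebra R g] :
    (LieSubalgebra.lieSpan R g (Set.range y) : Submodule R g) ≤
      Submodule.span R (iterBrackets y) := by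
  let A : LieSubalgebra R g :=
    { Submodule.span R (iterBrackets y) with
      lie_mem' := lie_mem_span_of_forall_lie_mem fun _ hu _ hv ↦
        deepIterBrackets_subset_iterBrackets (lie_mem_deepIterBrackets hu hv) }
  change _ ≤ A
  rw [LieSubalgebra.lieSpan_le]
  rintro _ ⟨i, rfl⟩
  exact Submodule.subset_span ⟨1, .base i⟩

end IterBrackets

theorem derived_isNilpotent_of_deep_iterBrackets_adNilpotent_general
    {K : Type*} [Field K]
    {g : Type*} [LieRing g] [LieAlgebra K g] [FiniteDimensional K g]
    {n : ℕ} (y : Fin n → g)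
    (hy : ∀ (z : g) (d : ℕ), IterBracketDepth y z d → 2 ≤ d →
        IsNilpotent (LieAlgebra.ad K g z)) :
    LieModule.IsNilpotent
        (LieAlgebra.derivedSeries K (LieSubalgebra.lieSpan K g (Set.range y)) 1)
        (LieAlgebra.derivedSeries K (LieSubalgebra.lieSpan K g (Set.range y)) 1) ∧
      LieAlgebra.IsSolvable (LieSubalgebra.lieSpan K g (Set.range y)) := by
  set k := LieSubalgebra.lieSpan K g (Set.range y)
  have hk_derived (x : k) (hx : x ∈ LieAlgebra.derivedSeries K k 1) :
      IsNilpotent (LieAlgebra.ad K g x) :=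
    LieSubalgebra.isNilpotent_ad_of_mem_span (fun _ hu _ hv ↦
      lie_mem_deepIterBrackets_of_mem_deep hu hv) (fun z ⟨d, hd, hz⟩ ↦ hy z d hz hd)
      (LieSubalgebra.coe_mem_span_of_mem_derivedSeries_one
        (lieSpan_range_le_span_iterBrackets K) (fun _ hu _ hv ↦ lie_mem_deepIterBrackets hu hv) hx)
  have hk_nil : LieModule.IsNilpotent (LieAlgebra.derivedSeries K k 1)
      (LieAlgebra.derivedSeries K k 1) := by
    refine (LieAlgebra.isNilpotent_iff_forall (R := K)).mpr fun x ↦ ?_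
    have hx : IsNilpotent (LieAlgebra.ad K k x) :=
      k.isNilpotent_ad_of_isNilpotent_ad (hk_derived x x.2)
    exact LieSubalgebra.isNilpotent_ad_of_isNilpotent_ad
      (LieIdeal.toLieSubalgebra K k (LieAlgebra.derivedSeries K k 1)) (x := x) hx
  exact ⟨hk_nil, LieAlgebra.isSolvable_of_isSolvable_derivedSeries_one (R := K)⟩

/-- If every iterated bracket of `y₁, …, yₙ` of depth at least `2` is ad-nilpotent in a
finite-dimensional Lie algebra over an algebraically closed field of characteristic zero,
then the Lie subalgebra `k` generated by `y₁, …, yₙ` has nilpotent derived subalgebra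
`[k, k]`; in particular `k` is solvable. -/
theorem derived_isNilpotent_of_deep_iterBrackets_adNilpotent
    {K : Type*} [Field K] [IsAlgClosed K] [CharZero K]
    {g : Type*} [LieRing g] [LieAlgebra K g] [FiniteDimensional K g]
    {n : ℕ} (y : Fin n → g)
    (hy : ∀ (z : g) (d : ℕ), IterBracketDepth y z d → 2 ≤ d →
        IsNilpotent (LieAlgebra.ad K g z)) :
    LieModule.IsNilpotent
        (LieAlgebra.derivedSeries K (LieSubalgebra.lieSpan K g (Set.range y)) 1)
        (LieAlgebra.derivedSeries K (LieSubalgebra.lieSpan K g (Set.range y)) 1) ∧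
      LieAlgebra.IsSolvable (LieSubalgebra.lieSpan K g (Set.range y)) :=
  derived_isNilpotent_of_deep_iterBrackets_adNilpotent_general y hy
end
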